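/- Let n ≥ 1 and for each product i let v_i > 0, a_i > 0, q_i ∈ (0,1), and c_i = q_i (1 − q_i) (i.e., the polynomial continuation with ρ = 1 and r = 1). Let π* maximize λ(σ) and π_c* maximize λ̄(σ) over all permutations σ of {1,…,n}. Then λ̄(π_c*) ≤ (4/3) · λ(π*): the market with continuation is at most 33% more efficient. -/

import Mathlib

/-! Since `q (1 - q) ≤ 1/4`, the continuation mass `∑ pᵢ cᵢ` of any ranking is at most `1/4`, so
the denominator of `λ̄(σ)` is at least `3/4` and `λ̄(σ) ≤ (4/3) λ(σ) ≤ (4/3) λ(π*)` for every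
ranking `σ`, in particular for `πc*`. -/

lemma mul_one_sub_le_quarter (x : ℝ) : x * (1 - x) ≤ 1 / 4 := by
  nlinarith [sq_nonneg (x - 1 / 2)]

section Weights

variable {ι : Type*} [Fintype ι]

lemma div_sum_nonneg {w : ι → ℝ} (hw : ∀ i, 0 ≤ w i) (i : ι) : 0 ≤ w i / ∑ j, w j :=
  div_nonneg (hw i) (Finset.sum_nonneg fun j _ => hw j)

lemma sum_div_sum_eq_one [Nonempty ι] {w : ι → ℝ} (hw : ∀ i, 0 < w i) :
    ∑ i, w i / ∑ j, w j = 1 := by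
  rw [← Finset.sum_div, div_self (Finset.sum_pos (fun j _ => hw j) Finset.univ_nonempty).ne']

lemma sum_mul_le_of_le {p c : ι → ℝ} {b : ℝ} (hp : ∀ i, 0 ≤ p i) (hp_sum : ∑ i, p i = 1)
    (hc : ∀ i, c i ≤ b) : ∑ i, p i * c i ≤ b :=
  calc ∑ i, p i * c i ≤ ∑ i, p i * b :=
        Finset.sum_le_sum fun i _ => mul_le_mul_of_nonneg_left (hc i) (hp i)
    _ = b := by rw [← Finset.sum_mul, hp_sum, one_mul]

lemma sum_mul_div_one_sub_sum_mul_le {p q : ι → ℝ} (hp : ∀ i, 0 ≤ p i)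
    (hp_sum : ∑ i, p i = 1) (hq : ∀ i, 0 ≤ q i) :
    (∑ i, p i * q i) / (1 - ∑ i, p i * (q i * (1 - q i))) ≤ 4 / 3 * ∑ i, p i * q i := by
  have hden : 3 / 4 ≤ 1 - ∑ i, p i * (q i * (1 - q i)) := by
    linarith [sum_mul_le_of_le hp hp_sum fun i => mul_one_sub_le_quarter (q i)]
  calc (∑ i, p i * q i) / (1 - ∑ i, p i * (q i * (1 - q i)))
      ≤ (∑ i, p i * q i) / (3 / 4) :=
        div_le_div_of_nonneg_left (Finset.sum_nonneg fun i _ => mul_nonneg (hp i) (hq i))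
          (by norm_num) hden
    _ = 4 / 3 * ∑ i, p i * q i := by ring

end Weights

theorem stmt9_general (n : ℕ) (v a q c : Fin (n + 1) → ℝ)
    (hv : ∀ i, 0 < v i) (ha : ∀ i, 0 < a i)
    (hq : ∀ i, q i ∈ Set.Ioo (0 : ℝ) 1)
    (hcdef : ∀ i, c i = q i * (1 - q i))
    (p : Equiv.Perm (Fin (n + 1)) → Fin (n + 1) → ℝ)
    (hp : ∀ σ i, p σ i = v (σ i) * a i / ∑ j, v (σ j) * a j)
    (lam lamBar : Equiv.Perm (Fin (n + 1)) → ℝ)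
    (hlam : ∀ σ, lam σ = ∑ i, p σ i * q i)
    (hlamBar : ∀ σ, lamBar σ = (∑ i, p σ i * q i) / (1 - ∑ i, p σ i * c i))
    (πStar πcStar : Equiv.Perm (Fin (n + 1)))
    (hπStar : ∀ σ, lam σ ≤ lam πStar) :
    lamBar πcStar ≤ (4 / 3) * lam πStar := by
  have hw : ∀ i, 0 < v (πcStar i) * a i := fun i => mul_pos (hv _) (ha _)
  have hp_nonneg : ∀ i, 0 ≤ p πcStar i := fun i => by
    rw [hp]; exact div_sum_nonneg (fun j => (hw j).le) i
  have hp_sum : ∑ i, p πcStar i = 1 := by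
    simp only [hp]; exact sum_div_sum_eq_one hw
  calc lamBar πcStar ≤ 4 / 3 * lam πcStar := by
        rw [hlamBar, hlam, funext hcdef]
        exact sum_mul_div_one_sub_sum_mul_le hp_nonneg hp_sum fun i => (hq i).1.le
    _ ≤ 4 / 3 * lam πStar := by linarith [hπStar πcStar]

/-- With the polynomial continuation `ρ = 1`, `r = 1`, i.e.
`c i = q i * (1 - q i)`, and `π*`, `πc*` maximizing `λ` and `λ̄` respectively over
all rankings, one has `λ̄(πc*) ≤ (4/3) * λ(π*)`: the market with continuation is at
most 33% more efficient. -/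
theorem stmt9 (n : ℕ) (v a q c : Fin (n + 1) → ℝ)
    (hv : ∀ i, 0 < v i) (ha : ∀ i, 0 < a i)
    (hq : ∀ i, q i ∈ Set.Ioo (0 : ℝ) 1)
    (hcdef : ∀ i, c i = q i * (1 - q i))
    (p : Equiv.Perm (Fin (n + 1)) → Fin (n + 1) → ℝ)
    (hp : ∀ σ i, p σ i = v (σ i) * a i / ∑ j, v (σ j) * a j)
    (lam lamBar : Equiv.Perm (Fin (n + 1)) → ℝ)
    (hlam : ∀ σ, lam σ = ∑ i, p σ i * q i)
    (hlamBar : ∀ σ, lamBar σ = (∑ i, p σ i * q i) / (1 - ∑ i, p σ i * c i))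
    (πStar πcStar : Equiv.Perm (Fin (n + 1)))
    (hπStar : ∀ σ, lam σ ≤ lam πStar)
    (hπcStar : ∀ σ, lamBar σ ≤ lamBar πcStar) :
    lamBar πcStar ≤ (4 / 3) * lam πStar :=
  stmt9_general n v a q c hv ha hq hcdef p hp lam lamBar hlam hlamBar πStar πcStar hπStar
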